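/- Let λ be a frequency with limsup_{N→∞} (log N)/λ_N = 0, and let (a_n) belong to D∞^ext(λ) with extension f and bound M. Then for every ε > 0 the series ∑_n a_n e^{−λ_n s} converges absolutely and uniformly on {s : Re s > ε}, and its sum equals f there; that is, λ satisfies Bohr's theorem. -/

import Mathlib

/-!
When `log N / λ_N → 0`, the series `∑ e^{-λ_n t}` converges for every `t > 0`, so convergence of
`∑ a_n e^{-λ_n s}` at one point forces absolute convergence to its right. On a line `Re s = σ` of
absolute convergence, Bohr's mean value `(2T)⁻¹ ∫_{-T}^{T} f(σ+it) e^{λ_k (σ+it)} dt` tends to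
`a_k`; by Cauchy's theorem the line can be moved to any `σ > 0` at cost `O(1/T)`, which gives
`|a_k| ≤ M e^{λ_k σ}` and hence `|a_k| ≤ M`. With bounded coefficients the series converges
absolutely and uniformly on `Re s > ε`, its sum is holomorphic on `Re s > 0`, and it agrees
with `f` there by the identity theorem.
-/

open Filter Finset Complex MeasureTheory Topology

/-- Partial sum `S_N(s) = ∑_{n=1}^N a_n e^{−λ_n s}` of a general Dirichlet series. -/
noncomputable def partialSum (lam : ℕ → ℝ) (a : ℕ → ℂ) (N : ℕ) (s : ℂ) : ℂ :=
  ∑ n ∈ Finset.Icc 1 N, a n * Complex.exp (-(lam n : ℂ) * s)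

/-- A frequency: strictly increasing (indexed from 1), nonnegative, tending to infinity. -/
def IsFrequency (lam : ℕ → ℝ) : Prop :=
  (∀ n : ℕ, 1 ≤ n → lam n < lam (n + 1)) ∧ 0 ≤ lam 1 ∧ Tendsto lam atTop atTop

/-- `(a_n)` belongs to `D∞^ext(λ)` with extension `f` and bound `M`. -/
def MemDExt (lam : ℕ → ℝ) (a : ℕ → ℂ) (f : ℂ → ℂ) (M : ℝ) : Prop :=
  (∃ σ₀ : ℝ,
    (∀ s : ℂ, σ₀ < s.re →
      ∃ L : ℂ, Tendsto (fun N => partialSum lam a N s) atTop (nhds L)) ∧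
    (∀ s : ℂ, max σ₀ 0 < s.re →
      Tendsto (fun N => partialSum lam a N s) atTop (nhds (f s)))) ∧
  DifferentiableOn ℂ f {s : ℂ | 0 < s.re} ∧
  (∀ s : ℂ, 0 < s.re → ‖f s‖ ≤ M)

open scoped Interval

theorem summable_exp_neg_mul_of_tendsto_log_div {lam : ℕ → ℝ} (hlam : Tendsto lam atTop atTop)
    (hL : Tendsto (fun N : ℕ => Real.log N / lam N) atTop (𝓝 0)) {t : ℝ} (ht : 0 < t) :
    Summable fun n => Real.exp (-lam n * t) := by
  have hsq : Summable fun n : ℕ => ((n : ℝ) ^ 2)⁻¹ := Real.summable_nat_pow_inv.2 one_lt_two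
  refine summable_of_isBigO_nat' hsq (Asymptotics.IsBigO.of_bound 1 ?_)
  filter_upwards [hL.eventually (gt_mem_nhds (half_pos ht)), hlam.eventually_gt_atTop 0,
    eventually_gt_atTop 0] with n hn hpos hn0
  have hlog : 2 * Real.log n ≤ lam n * t := by
    rw [div_lt_iff₀ hpos] at hn; linarith
  have hn0' : (0 : ℝ) < n := by exact_mod_cast hn0
  rw [one_mul, Real.norm_of_nonneg (Real.exp_pos _).le, Real.norm_of_nonneg (by positivity),
    ← Real.exp_log (pow_pos hn0' 2), ← Real.exp_neg, Real.log_pow]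
  exact Real.exp_le_exp.2 (by push_cast; linarith)

theorem exists_norm_le_of_tendsto_sum_range {E : Type*} [NormedAddCommGroup E] {g : ℕ → E} {L : E}
    (h : Tendsto (fun N => ∑ m ∈ range N, g m) atTop (𝓝 L)) : ∃ C, ∀ m, ‖g m‖ ≤ C := by
  have hg : Tendsto g atTop (𝓝 0) := by
    simpa [Finset.sum_range_succ] using (h.comp (tendsto_add_atTop_nat 1)).sub h
  obtain ⟨C, hC⟩ := hg.norm.bddAbove_range
  exact ⟨C, fun m => hC (Set.mem_range_self m)⟩

theorem norm_mul_cexp_neg_mul (c : ℂ) (x : ℝ) (s : ℂ) :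
    ‖c * cexp (-(x : ℂ) * s)‖ = ‖c‖ * Real.exp (-x * s.re) := by
  rw [norm_mul, Complex.norm_exp]
  simp [Complex.mul_re]

theorem norm_mul_cexp_neg_mul_le {c : ℂ} {x M ε : ℝ} {s : ℂ} (hc : ‖c‖ ≤ M) (hx : 0 ≤ x)
    (hs : ε ≤ s.re) : ‖c * cexp (-(x : ℂ) * s)‖ ≤ M * Real.exp (-x * ε) := by
  rw [norm_mul_cexp_neg_mul]
  exact mul_le_mul hc (Real.exp_le_exp.2 (by nlinarith)) (Real.exp_pos _).le
    ((norm_nonneg c).trans hc)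

theorem summable_norm_mul_cexp_of_tendsto_sum_range {μ : ℕ → ℝ} {c : ℕ → ℂ} {σ : ℝ} {L : ℂ}
    {s : ℂ} (hexp : ∀ t, 0 < t → Summable fun m => Real.exp (-μ m * t))
    (hσ : Tendsto (fun N => ∑ m ∈ range N, c m * cexp (-μ m * σ)) atTop (𝓝 L))
    (hs : σ < s.re) : Summable fun m => ‖c m * cexp (-μ m * s)‖ := by
  obtain ⟨C, hC⟩ := exists_norm_le_of_tendsto_sum_range hσ
  refine ((hexp _ (sub_pos.2 hs)).mul_left C).of_nonneg_of_le (fun m => norm_nonneg _)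
    fun m => ?_
  have hCm := hC m
  rw [norm_mul_cexp_neg_mul, Complex.ofReal_re] at hCm
  rw [norm_mul_cexp_neg_mul, show -μ m * s.re = -μ m * σ + -μ m * (s.re - σ) by ring,
    Real.exp_add, ← mul_assoc]
  exact mul_le_mul_of_nonneg_right hCm (Real.exp_pos _).le

noncomputable def centeredMean (g : ℝ → ℂ) (T : ℝ) : ℂ :=
  (2 * T : ℂ)⁻¹ * ∫ t in -T..T, g t

theorem norm_inv_two_mul_ofReal {T : ℝ} (hT : 0 ≤ T) : ‖(2 * T : ℂ)⁻¹‖ = (2 * T)⁻¹ := by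
  rw [norm_inv, ← Complex.ofReal_ofNat, ← Complex.ofReal_mul, Complex.norm_real,
    Real.norm_of_nonneg (by positivity)]

theorem norm_centeredMean_le {g : ℝ → ℂ} {K T : ℝ} (hT : 0 < T) (hg : ∀ t, ‖g t‖ ≤ K) :
    ‖centeredMean g T‖ ≤ K := by
  have hint := intervalIntegral.norm_integral_le_of_norm_le_const (a := -T) (b := T)
    fun t _ => hg t
  rw [centeredMean, norm_mul, norm_inv_two_mul_ofReal hT.le, inv_mul_le_iff₀ (by positivity)]
  rw [abs_of_pos (by linarith)] at hint
  linarith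

theorem tendsto_centeredMean_cexp (θ : ℝ) :
    Tendsto (fun T => centeredMean (fun t => cexp (θ * t * I)) T) atTop
      (𝓝 (if θ = 0 then 1 else 0)) := by
  split_ifs with hθ
  · refine tendsto_const_nhds.congr' ?_
    filter_upwards [eventually_gt_atTop 0] with T hT
    have : (T : ℂ) ≠ 0 := by exact_mod_cast hT.ne'
    simp [centeredMean, hθ]
    field_simp
    norm_num
  · have hc : (θ : ℂ) * I ≠ 0 := by simp [hθ]
    have hbound : ∀ T : ℝ, 0 < T →
        ‖centeredMean (fun t => cexp (θ * t * I)) T‖ ≤ (|θ| * T)⁻¹ := by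
      intro T hT
      have hunit : ∀ u : ℝ, ‖cexp (θ * I * u)‖ = 1 := fun u => by
        rw [Complex.norm_exp]; simp
      have hnum : ‖cexp (θ * I * T) - cexp (θ * I * (-T : ℝ))‖ ≤ 2 := by
        refine (norm_sub_le _ _).trans ?_; rw [hunit, hunit]; norm_num
      simp_rw [centeredMean, mul_right_comm _ _ I, integral_exp_mul_complex hc]
      rw [norm_mul, norm_div, norm_inv, norm_mul, norm_mul, Complex.norm_I, mul_one,
        Complex.norm_real, Complex.norm_real, Real.norm_eq_abs, Real.norm_eq_abs,
        abs_of_pos hT, Complex.norm_ofNat]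
      calc (2 * T)⁻¹ * (‖cexp (θ * I * T) - cexp (θ * I * (-T : ℝ))‖ / |θ|)
          ≤ (2 * T)⁻¹ * (2 / |θ|) := by gcongr
        _ = (|θ| * T)⁻¹ := by field_simp
    refine squeeze_zero_norm' ?_ (tendsto_inv_atTop_zero.comp
      (tendsto_id.const_mul_atTop (abs_pos.2 hθ)))
    filter_upwards [eventually_gt_atTop 0] with T hT using hbound T hT

theorem tendsto_centeredMean_tsum {A : ℕ → ℂ} (θ : ℕ → ℝ) (hA : Summable fun m => ‖A m‖) :
    Tendsto (fun T => centeredMean (fun t => ∑' m, A m * cexp (θ m * t * I)) T) atTop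
      (𝓝 (∑' m, if θ m = 0 then A m else 0)) := by
  have hunit : ∀ m (t : ℝ), ‖A m * cexp (θ m * t * I)‖ = ‖A m‖ := fun m t => by
    rw [norm_mul, Complex.norm_exp]; simp
  have hswap : ∀ T, centeredMean (fun t => ∑' m, A m * cexp (θ m * t * I)) T =
      ∑' m, A m * centeredMean (fun t => cexp (θ m * t * I)) T := by
    intro T
    have hsum := intervalIntegral.hasSum_integral_of_dominated_convergence (μ := volume)
      (a := -T) (b := T) (F := fun m t => A m * cexp (θ m * t * I)) (fun m _ => ‖A m‖)
      (fun m => by fun_prop) (fun m => .of_forall fun t _ => (hunit m t).le)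
      (.of_forall fun t _ => hA) intervalIntegrable_const
      (.of_forall fun t _ => (hA.of_norm_bounded fun m => (hunit m t).le).hasSum)
    simp_rw [centeredMean, ← hsum.tsum_eq, intervalIntegral.integral_const_mul, ← tsum_mul_left,
      mul_left_comm]
  simp_rw [hswap]
  refine tendsto_tsum_of_dominated_convergence hA
    (fun m => by simpa [mul_ite] using (tendsto_centeredMean_cexp (θ m)).const_mul (A m)) ?_
  filter_upwards [eventually_gt_atTop 0] with T hT m
  rw [norm_mul]
  exact mul_le_of_le_one_right (norm_nonneg _)
    (norm_centeredMean_le hT fun t => by rw [Complex.norm_exp]; simp)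

theorem tendsto_centeredMean_of_eq_tsum {g : ℂ → ℂ} {μ : ℕ → ℝ} {c : ℕ → ℂ} {σ : ℝ}
    (hμ : Function.Injective μ) (hc : Summable fun m => ‖c m‖ * Real.exp (-μ m * σ))
    (hg : ∀ t : ℝ, g (σ + t * I) = ∑' m, c m * cexp (-μ m * (σ + t * I))) (k : ℕ) :
    Tendsto (fun T => centeredMean (fun t => g (σ + t * I) * cexp (μ k * (σ + t * I))) T)
      atTop (𝓝 (c k)) := by
  set A : ℕ → ℂ := fun m => c m * cexp ((μ k - μ m : ℝ) * σ)
  have hline : ∀ t : ℝ, g (σ + t * I) * cexp (μ k * (σ + t * I)) =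
      ∑' m, A m * cexp ((μ k - μ m : ℝ) * t * I) := by
    intro t
    rw [hg, ← tsum_mul_right]
    congr 1 with m
    simp only [A, mul_assoc, ← Complex.exp_add]
    congr 2
    push_cast
    ring
  have hA : Summable fun m => ‖A m‖ := by
    refine (hc.mul_right (Real.exp (μ k * σ))).congr fun m => ?_
    rw [norm_mul, Complex.norm_exp, mul_assoc, ← Real.exp_add]
    simp only [← Complex.ofReal_mul, Complex.ofReal_re]
    ring_nf
  have hcoef : (∑' m, if μ k - μ m = 0 then A m else 0) = c k := by
    simp_rw [sub_eq_zero, hμ.eq_iff, eq_comm (a := k)]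
    simp [A]
  simpa only [hline, hcoef] using tendsto_centeredMean_tsum (fun m => μ k - μ m) hA

theorem norm_integral_vertical_sub_le {F : ℂ → ℂ} {σ σ' T K : ℝ}
    (hF : DifferentiableOn ℂ F ([[σ, σ']] ×ℂ [[-T, T]]))
    (hK : ∀ x ∈ [[σ, σ']], ∀ y : ℝ, ‖F ((x : ℂ) + y * I)‖ ≤ K) :
    ‖(∫ t in -T..T, F (σ' + t * I)) - ∫ t in -T..T, F (σ + t * I)‖ ≤ 2 * K * |σ' - σ| := by
  have hrect := integral_boundary_rect_eq_zero_of_differentiableOn F ⟨σ, -T⟩ ⟨σ', T⟩ hF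
  simp only [smul_eq_mul] at hrect
  have hhoriz : ∀ y : ℝ, ‖∫ x in σ..σ', F (x + y * I)‖ ≤ K * |σ' - σ| := fun y =>
    intervalIntegral.norm_integral_le_of_norm_le_const fun x hx => hK x (Set.uIoc_subset_uIcc hx) y
  calc ‖(∫ t in -T..T, F (σ' + t * I)) - ∫ t in -T..T, F (σ + t * I)‖
      = ‖(∫ x in σ..σ', F (x + T * I)) - ∫ x in σ..σ', F (x + (-T : ℝ) * I)‖ := by
        rw [← one_mul ‖_ - _‖, ← Complex.norm_I, ← norm_mul]
        congr 1
        linear_combination hrect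
    _ ≤ K * |σ' - σ| + K * |σ' - σ| := (norm_sub_le _ _).trans (add_le_add (hhoriz T) (hhoriz _))
    _ = 2 * K * |σ' - σ| := by ring

theorem tendsto_centeredMean_of_vertical_shift {F : ℂ → ℂ} {σ τ K : ℝ} {L : ℂ}
    (hF : DifferentiableOn ℂ F ([[τ, σ]] ×ℂ Set.univ))
    (hK : ∀ x ∈ [[τ, σ]], ∀ y : ℝ, ‖F ((x : ℂ) + y * I)‖ ≤ K)
    (hσ : Tendsto (fun T => centeredMean (fun t => F (σ + t * I)) T) atTop (𝓝 L)) :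
    Tendsto (fun T => centeredMean (fun t => F (τ + t * I)) T) atTop (𝓝 L) := by
  have hdecay : Tendsto (fun T : ℝ => (2 * T)⁻¹ * (2 * K * |σ - τ|)) atTop (𝓝 0) := by
    simpa using (tendsto_inv_atTop_zero.comp (tendsto_id.const_mul_atTop two_pos)).mul_const
      (2 * K * |σ - τ|)
  have hdiff : Tendsto (fun T => centeredMean (fun t => F (σ + t * I)) T -
      centeredMean (fun t => F (τ + t * I)) T) atTop (𝓝 0) := by
    refine squeeze_zero_norm' ?_ hdecay
    filter_upwards [eventually_gt_atTop 0] with T hT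
    rw [centeredMean, centeredMean, ← mul_sub, norm_mul, norm_inv_two_mul_ofReal hT.le]
    exact mul_le_mul_of_nonneg_left
      (norm_integral_vertical_sub_le (hF.mono fun z hz => ⟨hz.1, trivial⟩) hK) (by positivity)
  simpa only [sub_sub_cancel, sub_zero] using hσ.sub hdiff

theorem norm_coeff_le_of_eq_tsum {f : ℂ → ℂ} {M σ : ℝ} {μ : ℕ → ℝ} {c : ℕ → ℂ}
    (hf : DifferentiableOn ℂ f {s | 0 < s.re}) (hfM : ∀ s : ℂ, 0 < s.re → ‖f s‖ ≤ M)
    (hμ : Function.Injective μ) (hσ : 0 < σ) (hc : Summable fun m => ‖c m‖ * Real.exp (-μ m * σ))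
    (hfc : ∀ t : ℝ, f (σ + t * I) = ∑' m, c m * cexp (-μ m * (σ + t * I))) (k : ℕ) :
    ‖c k‖ ≤ M := by
  have hM : 0 ≤ M := (norm_nonneg _).trans (hfM 1 one_pos)
  set F : ℂ → ℂ := fun z => f z * cexp (μ k * z)
  have hFnorm : ∀ z : ℂ, 0 < z.re → ‖F z‖ ≤ M * Real.exp (μ k * z.re) := fun z hz => by
    rw [norm_mul, Complex.norm_exp, Complex.re_ofReal_mul]
    exact mul_le_mul_of_nonneg_right (hfM z hz) (Real.exp_pos _).le
  have hmean : Tendsto (fun T => centeredMean (fun t => F (σ + t * I)) T) atTop (𝓝 (c k)) :=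
    tendsto_centeredMean_of_eq_tsum hμ hc hfc k
  have hτ : ∀ τ ∈ Set.Ioo 0 σ, ‖c k‖ ≤ M * Real.exp (μ k * τ) := by
    rintro τ ⟨hτ, hτσ⟩
    have hstrip : ∀ x ∈ [[τ, σ]], 0 < x ∧ x ≤ σ := fun x hx => by
      rw [Set.uIcc_of_le hτσ.le] at hx; exact ⟨hτ.trans_le hx.1, hx.2⟩
    have hF : DifferentiableOn ℂ F ([[τ, σ]] ×ℂ Set.univ) :=
      (hf.mono fun z hz => (hstrip z.re hz.1).1).mul (by fun_prop)
    have hK : ∀ x ∈ [[τ, σ]], ∀ y : ℝ, ‖F (x + y * I)‖ ≤ M * Real.exp (|μ k| * σ) := by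
      intro x hx y
      obtain ⟨hx0, hxσ⟩ := hstrip x hx
      refine (hFnorm _ (by simpa using hx0)).trans
        (mul_le_mul_of_nonneg_left (Real.exp_le_exp.2 ?_) hM)
      simp only [Complex.add_re, Complex.ofReal_re, Complex.mul_re, Complex.I_re,
        Complex.ofReal_im, Complex.I_im]
      nlinarith [le_abs_self (μ k), abs_nonneg (μ k)]
    refine le_of_tendsto (tendsto_centeredMean_of_vertical_shift hF hK hmean).norm <|
      (eventually_gt_atTop 0).mono fun T hT => norm_centeredMean_le hT fun t => ?_
    simpa using hFnorm (τ + t * I) (by simpa using hτ)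
  have hlim : Tendsto (fun τ => M * Real.exp (μ k * τ)) (𝓝[>] 0) (𝓝 M) :=
    ((by fun_prop : Continuous fun τ => M * Real.exp (μ k * τ)).tendsto' 0 M (by simp)).mono_left
      nhdsWithin_le_nhds
  exact ge_of_tendsto hlim (by filter_upwards [Ioo_mem_nhdsGT hσ] using hτ)

theorem norm_coeff_le_of_tendsto_sum_range {μ : ℕ → ℝ} {c : ℕ → ℂ} {f : ℂ → ℂ} {M σ : ℝ}
    (hexp : ∀ t, 0 < t → Summable fun m => Real.exp (-μ m * t))
    (hf : DifferentiableOn ℂ f {s | 0 < s.re})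
    (hlim : ∀ s : ℂ, σ < s.re →
      Tendsto (fun N => ∑ m ∈ range N, c m * cexp (-μ m * s)) atTop (𝓝 (f s)))
    (hμ : Function.Injective μ)
    (hfM : ∀ s : ℂ, 0 < s.re → ‖f s‖ ≤ M) (k : ℕ) : ‖c k‖ ≤ M := by
  set σ₁ := max σ 0 + 1
  have hσ₁ : σ < σ₁ := by linarith [le_max_left σ 0]
  have hσ₂ : 0 < σ₁ + 1 := by linarith [le_max_right σ 0]
  have hsumm : ∀ s : ℂ, σ₁ < s.re → Summable fun m => ‖c m * cexp (-μ m * s)‖ := fun s hs =>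
    summable_norm_mul_cexp_of_tendsto_sum_range hexp (hlim σ₁ (by simpa using hσ₁)) hs
  refine norm_coeff_le_of_eq_tsum hf hfM hμ hσ₂ ?_ (fun t => ?_) k
  · simpa only [norm_mul_cexp_neg_mul, Complex.ofReal_re] using hsumm (σ₁ + 1 : ℝ) (by simp)
  · have hs : σ₁ < ((σ₁ + 1 : ℝ) + t * I : ℂ).re := by simp
    exact ((hasSum_iff_tendsto_nat_of_summable_norm (hsumm _ hs)).2
      (hlim _ (hσ₁.trans hs))).tsum_eq.symm

theorem hasSum_of_norm_coeff_le {μ : ℕ → ℝ} {c : ℕ → ℂ} {f : ℂ → ℂ} {M σ : ℝ}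
    (hexp : ∀ t, 0 < t → Summable fun m => Real.exp (-μ m * t))
    (hf : DifferentiableOn ℂ f {s | 0 < s.re})
    (hlim : ∀ s : ℂ, σ < s.re →
      Tendsto (fun N => ∑ m ∈ range N, c m * cexp (-μ m * s)) atTop (𝓝 (f s)))
    (hμ0 : ∀ m, 0 ≤ μ m) (hcM : ∀ m, ‖c m‖ ≤ M) {s : ℂ}
    (hs : 0 < s.re) : HasSum (fun m => c m * cexp (-μ m * s)) (f s) := by
  have hsumm : ∀ z : ℂ, 0 < z.re → Summable fun m => ‖c m * cexp (-μ m * z)‖ := fun z hz =>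
    ((hexp _ hz).mul_left M).of_nonneg_of_le (fun m => norm_nonneg _)
      fun m => norm_mul_cexp_neg_mul_le (hcM m) (hμ0 m) le_rfl
  set G : ℂ → ℂ := fun z => ∑' m, c m * cexp (-μ m * z)
  have hG : DifferentiableOn ℂ G {z | 0 < z.re} := fun z hz => by
    have hU : IsOpen {w : ℂ | z.re / 2 < w.re} := isOpen_lt continuous_const Complex.continuous_re
    refine (((differentiableOn_tsum_of_summable_norm ((hexp _ (half_pos hz)).mul_left M)
      (fun m => by fun_prop) hU fun m w hw => norm_mul_cexp_neg_mul_le (hcM m) (hμ0 m)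
        (le_of_lt hw)).differentiableAt (hU.mem_nhds ?_))).differentiableWithinAt
    simpa using half_lt_self (show 0 < z.re from hz)
  have hright : IsOpen {z : ℂ | max σ 0 < z.re} := isOpen_lt continuous_const Complex.continuous_re
  have hfar : ∀ z : ℂ, max σ 0 < z.re → G z = f z := fun z hz =>
    ((hasSum_iff_tendsto_nat_of_summable_norm (hsumm z ((le_max_right _ _).trans_lt hz))).2
      (hlim z ((le_max_left _ _).trans_lt hz))).tsum_eq
  have hopen : IsOpen {z : ℂ | 0 < z.re} := isOpen_lt continuous_const Complex.continuous_re
  have hGf : Set.EqOn G f {z | 0 < z.re} := by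
    refine (hG.analyticOnNhd hopen).eqOn_of_preconnected_of_eventuallyEq (hf.analyticOnNhd hopen)
      (convex_halfSpace_re_gt 0).isPreconnected (z₀ := (max σ 0 + 1 : ℝ)) (by simp; positivity) ?_
    filter_upwards [hright.mem_nhds (show max σ 0 < ((max σ 0 + 1 : ℝ) : ℂ).re by simp)]
      with z hz using hfar z hz
  rw [← hGf hs]
  exact (hsumm s hs).of_norm.hasSum

theorem partialSum_eq_sum_range (lam : ℕ → ℝ) (a : ℕ → ℂ) (N : ℕ) (s : ℂ) :
    partialSum lam a N s = ∑ m ∈ range N, a (m + 1) * cexp (-(lam (m + 1) : ℂ) * s) := by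
  rw [partialSum, Finset.range_eq_Ico, Finset.sum_Ico_add' (fun n => a n * cexp (-(lam n : ℂ) * s))]
  rfl

/-- Bohr's theorem for frequencies with `L(λ) = 0`. -/
theorem bohr_theorem_of_L_zero (lam : ℕ → ℝ) (a : ℕ → ℂ) (f : ℂ → ℂ) (M : ℝ)
    (hfreq : IsFrequency lam)
    (hL : Tendsto (fun N : ℕ => Real.log N / lam N) atTop (nhds 0))
    (hmem : MemDExt lam a f M) :
    ∀ ε : ℝ, 0 < ε →
      (∀ s : ℂ, ε < s.re →
        Summable (fun n : ℕ =>
          ‖a (n + 1) * Complex.exp (-(lam (n + 1) : ℂ) * s)‖)) ∧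
      (∀ δ : ℝ, 0 < δ → ∃ N₀ : ℕ, ∀ N : ℕ, N₀ ≤ N → ∀ s : ℂ, ε < s.re →
        ‖partialSum lam a N s - f s‖ ≤ δ) := by
  obtain ⟨hlt, hlam1, hlam_top⟩ := hfreq
  obtain ⟨⟨σ₀, -, hlim⟩, hf, hfM⟩ := hmem
  have hlam_mono : StrictMono fun m => lam (m + 1) :=
    strictMono_nat_of_lt_succ fun m => hlt (m + 1) (by omega)
  have hlam_nonneg : ∀ m, 0 ≤ lam (m + 1) := fun m =>
    hlam1.trans (hlam_mono.monotone (Nat.zero_le m))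
  have hexp : ∀ t, 0 < t → Summable fun m => Real.exp (-lam (m + 1) * t) := fun t ht =>
    (summable_nat_add_iff 1).2 (summable_exp_neg_mul_of_tendsto_log_div hlam_top hL ht)
  simp_rw [partialSum_eq_sum_range] at hlim ⊢
  have hcM := norm_coeff_le_of_tendsto_sum_range hexp hf hlim hlam_mono.injective hfM
  intro ε hε
  have hbound : ∀ m, ∀ s ∈ {s : ℂ | ε < s.re},
      ‖a (m + 1) * cexp (-lam (m + 1) * s)‖ ≤ M * Real.exp (-lam (m + 1) * ε) :=
    fun m s hs => norm_mul_cexp_neg_mul_le (hcM m) (hlam_nonneg m) (le_of_lt hs)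
  have hmajorant := (hexp ε hε).mul_left M
  refine ⟨fun s hs => hmajorant.of_nonneg_of_le (fun m => norm_nonneg _)
    fun m => hbound m s hs, fun δ hδ => ?_⟩
  obtain ⟨N₀, hN₀⟩ := eventually_atTop.1
    (Metric.tendstoUniformlyOn_iff.1 (tendstoUniformlyOn_tsum_nat hmajorant hbound) δ hδ)
  refine ⟨N₀, fun N hN s hs => ?_⟩
  have hsum := hasSum_of_norm_coeff_le hexp hf hlim hlam_nonneg hcM (hε.trans hs)
  have hdist := hN₀ N hN s hs
  rw [hsum.tsum_eq, dist_comm, dist_eq_norm] at hdist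
  exact hdist.le
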